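/- arXiv:0708.3980 — 2 statements merged into one kernel-verified Lean document; each statement's English description precedes it below -/
import Mathlib

section
/- Let n m : ℕ with n, m ≥ 1, and let ρ : Matrix (Fin n × Fin m) (Fin n × Fin m) ℂ be Hermitian with trace 1. Then (ρ is positive semidefinite and Γ(ρ) is positive semidefinite) if and only if for all positive semidefinite matrices P Q : Matrix (Fin n × Fin m) (Fin n × Fin m) ℂ, one has 0 ≤ (Tr(ρ * (P + Γ(Q)))).re. -/
open Matrix ComplexOrder

/-- Partial transpose with respect to the second tensor factor. -/
def partialTranspose {n m : ℕ} (X : Matrix (Fin n × Fin m) (Fin n × Fin m) ℂ) :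
    Matrix (Fin n × Fin m) (Fin n × Fin m) ℂ :=
  fun p q => X (p.1, q.2) (q.1, p.2)

/-!
The cone of positive semidefinite matrices is self-dual for the pairing `re tr (A * P)`, and
`Γ` is self-adjoint for the trace pairing. Hence `P + Γ Q` pairs nonnegatively with `ρ` for all
positive semidefinite `P`, `Q` exactly when both `ρ` and `Γ ρ` lie in the dual of the
positive semidefinite cone, i.e. are positive semidefinite.
-/

namespace Matrix

variable {ι 𝕜 : Type*} [Fintype ι] [RCLike 𝕜]

lemma PosSemidef.trace_mul_nonneg {A P : Matrix ι ι 𝕜} (hA : A.PosSemidef)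
    (hP : P.PosSemidef) : 0 ≤ (A * P).trace := by
  classical
  open scoped MatrixOrder in
  obtain ⟨B, rfl⟩ := CStarAlgebra.nonneg_iff_eq_star_mul_self.mp hP.nonneg
  rw [← mul_assoc, trace_mul_comm, ← mul_assoc]
  exact (hA.mul_mul_conjTranspose_same B).trace_nonneg

lemma trace_mul_vecMulVec_star (A : Matrix ι ι 𝕜) (x : ι → 𝕜) :
    (A * vecMulVec x (star x)).trace = star x ⬝ᵥ A *ᵥ x := by
  rw [mul_vecMulVec, trace_vecMulVec, dotProduct_comm]

lemma IsHermitian.posSemidef_iff_forall_re_trace_mul_nonneg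
    {A : Matrix ι ι 𝕜} (hA : A.IsHermitian) :
    A.PosSemidef ↔ ∀ P : Matrix ι ι 𝕜, P.PosSemidef → 0 ≤ RCLike.re (A * P).trace := by
  refine ⟨fun hA' P hP => (RCLike.nonneg_iff.mp (hA'.trace_mul_nonneg hP)).1, fun h => ?_⟩
  refine .of_dotProduct_mulVec_nonneg hA fun x => RCLike.nonneg_iff.mpr ⟨?_, ?_⟩
  · simpa only [trace_mul_vecMulVec_star] using h _ (posSemidef_vecMulVec_self_star x)
  · exact hA.im_star_dotProduct_mulVec_self x

end Matrix

section PartialTranspose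

variable {n m : ℕ}

@[simp]
lemma partialTranspose_zero :
    partialTranspose (0 : Matrix (Fin n × Fin m) (Fin n × Fin m) ℂ) = 0 :=
  rfl

lemma Matrix.IsHermitian.partialTranspose {X : Matrix (Fin n × Fin m) (Fin n × Fin m) ℂ}
    (hX : X.IsHermitian) : (partialTranspose X).IsHermitian := by
  ext p q
  simpa [_root_.partialTranspose, conjTranspose_apply] using
    congrFun (congrFun hX (p.1, q.2)) (q.1, p.2)

lemma trace_mul_partialTranspose (X Y : Matrix (Fin n × Fin m) (Fin n × Fin m) ℂ) :
    (X * partialTranspose Y).trace = (partialTranspose X * Y).trace := by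
  simp only [trace, diag, mul_apply, partialTranspose]
  rw [← Finset.sum_product', ← Finset.sum_product']
  exact Finset.sum_nbij' (fun pq => ((pq.1.1, pq.2.2), (pq.2.1, pq.1.2)))
    (fun pq => ((pq.1.1, pq.2.2), (pq.2.1, pq.1.2)))
    (by simp) (by simp) (by simp) (by simp) (by simp)

end PartialTranspose

theorem stmt_1_general {n m : ℕ}
    (ρ : Matrix (Fin n × Fin m) (Fin n × Fin m) ℂ) (hρ : ρ.IsHermitian) :
    (ρ.PosSemidef ∧ (partialTranspose ρ).PosSemidef) ↔
    (∀ P Q : Matrix (Fin n × Fin m) (Fin n × Fin m) ℂ,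
      P.PosSemidef → Q.PosSemidef →
      0 ≤ ((ρ * (P + partialTranspose Q)).trace).re) := by
  rw [hρ.posSemidef_iff_forall_re_trace_mul_nonneg,
    hρ.partialTranspose.posSemidef_iff_forall_re_trace_mul_nonneg]
  constructor
  · rintro ⟨hρP, hΓρQ⟩ P Q hP hQ
    rw [mul_add, trace_add, Complex.add_re, trace_mul_partialTranspose]
    exact add_nonneg (hρP P hP) (hΓρQ Q hQ)
  · intro h
    exact ⟨fun P hP => by simpa using h P 0 hP .zero,
      fun Q hQ => by simpa [trace_mul_partialTranspose] using h 0 Q .zero hQ⟩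

theorem stmt_1 {n m : ℕ} (hn : 1 ≤ n) (hm : 1 ≤ m)
    (ρ : Matrix (Fin n × Fin m) (Fin n × Fin m) ℂ) (hρ : ρ.IsHermitian)
    (htr : ρ.trace = 1) :
    (ρ.PosSemidef ∧ (partialTranspose ρ).PosSemidef) ↔
    (∀ P Q : Matrix (Fin n × Fin m) (Fin n × Fin m) ℂ,
      P.PosSemidef → Q.PosSemidef →
      0 ≤ ((ρ * (P + partialTranspose Q)).trace).re) :=
  stmt_1_general ρ hρ
end

section
/- Let n m N : ℕ, let p : Fin N → ℝ with 0 ≤ p k for all k, and let σ : Fin N → Matrix (Fin n) (Fin n) ℂ and τ : Fin N → Matrix (Fin m) (Fin m) ℂ be families of positive semidefinite matrices. Set ρ := ∑ k, (p k : ℂ) • (σ k ⊗ₖ τ k). Then ρ is positive semidefinite and Γ(ρ) is positive semidefinite. -/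
/-!
The partial transpose of a product state `σ ⊗ τ` is the product state `σ ⊗ τᵀ`, and `τᵀ` is
positive semidefinite together with `τ`. Since `Γ` is linear, it maps a separable state to another
nonnegative combination of Kronecker products of positive semidefinite matrices, and such
combinations are positive semidefinite.
-/

open Matrix ComplexOrder Kronecker

section PartialTranspose

variable {n m : ℕ}

theorem partialTranspose_kronecker (A : Matrix (Fin n) (Fin n) ℂ)
    (B : Matrix (Fin m) (Fin m) ℂ) : partialTranspose (A ⊗ₖ B) = A ⊗ₖ Bᵀ := rfl

theorem partialTranspose_smul (c : ℂ) (X : Matrix (Fin n × Fin m) (Fin n × Fin m) ℂ) :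
    partialTranspose (c • X) = c • partialTranspose X := rfl

theorem partialTranspose_sum {ι : Type*} (s : Finset ι)
    (X : ι → Matrix (Fin n × Fin m) (Fin n × Fin m) ℂ) :
    partialTranspose (∑ k ∈ s, X k) = ∑ k ∈ s, partialTranspose (X k) := by
  ext
  simp only [partialTranspose, Matrix.sum_apply]

end PartialTranspose

theorem posSemidef_sum_smul_kronecker {ι n m : Type*} [Fintype ι] [Fintype n] [Fintype m]
    (p : ι → ℝ) (hp : ∀ k, 0 ≤ p k)
    {σ : ι → Matrix n n ℂ} (hσ : ∀ k, (σ k).PosSemidef)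
    {τ : ι → Matrix m m ℂ} (hτ : ∀ k, (τ k).PosSemidef) :
    (∑ k, (p k : ℂ) • (σ k ⊗ₖ τ k)).PosSemidef :=
  posSemidef_sum _ fun k _ =>
    ((hσ k).kronecker (hτ k)).smul (Complex.zero_le_real.mpr (hp k))

theorem stmt_10 {n m N : ℕ} (p : Fin N → ℝ) (hp : ∀ k, 0 ≤ p k)
    (σ : Fin N → Matrix (Fin n) (Fin n) ℂ) (hσ : ∀ k, (σ k).PosSemidef)
    (τ : Fin N → Matrix (Fin m) (Fin m) ℂ) (hτ : ∀ k, (τ k).PosSemidef) :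
    (∑ k, (p k : ℂ) • (σ k ⊗ₖ τ k)).PosSemidef ∧
    (partialTranspose (∑ k, (p k : ℂ) • (σ k ⊗ₖ τ k))).PosSemidef := by
  refine ⟨posSemidef_sum_smul_kronecker p hp hσ hτ, ?_⟩
  simp only [partialTranspose_sum, partialTranspose_smul, partialTranspose_kronecker]
  exact posSemidef_sum_smul_kronecker p hp hσ fun k => (hτ k).transpose
end
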